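/- arXiv:2409.05503 — 3 statements merged into one kernel-verified Lean document; each statement's English description precedes it below -/
import Mathlib

section
/- In a finite simple digraph, for any two distinct nodes i ≠ j, |F_jj| ≥ 2·|F_ij|; equivalently, the number of spanning converging forests in which j is a root is at least twice the number in which i lies in the tree rooted at j. Consequently ω_ij ≤ ω_jj/2. -/
open Finset

/-- A spanning converging forest of the digraph with edge relation `E`,
encoded by its successor map `f : V → Option V` (`f i = some j` means edge `(i,j)`
is in the forest, `f i = none` means `i` is a root).  Acyclicity is expressed by a
height function that strictly decreases along edges. -/
def IsSCF {V : Type*} (E : V → V → Prop) (f : V → Option V) : Prop :=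
  (∀ i j, f i = some j → E i j) ∧ ∃ h : V → ℕ, ∀ i j, f i = some j → h j < h i

open scoped Classical in
/-- The set `F` of all spanning converging forests of the digraph `E`. -/
noncomputable def forests {V : Type*} [Fintype V] [DecidableEq V]
    (E : V → V → Prop) : Finset (V → Option V) :=
  Finset.univ.filter (IsSCF E)

/-- The root `r_φ(i)` of the tree containing node `i` in the forest `f`:
follow successors until reaching a root. -/
def rootOf {V : Type*} [Fintype V] (f : V → Option V) (i : V) : V :=
  (fun x => (f x).getD x)^[Fintype.card V] i

/-- The combinatorial forest-matrix entry `ω_{ij} = |F_{ij}| / |F|`. -/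
noncomputable def fOmega {V : Type*} [Fintype V] [DecidableEq V]
    (E : V → V → Prop) (i j : V) : ℝ :=
  (((forests E).filter (fun f => rootOf f i = j)).card : ℝ) / ((forests E).card : ℝ)

/-- Expectation of `g` under a uniformly random spanning converging forest. -/
noncomputable def expVal {V : Type*} [Fintype V] [DecidableEq V]
    (E : V → V → Prop) (g : (V → Option V) → ℝ) : ℝ :=
  (∑ f ∈ forests E, g f) / ((forests E).card : ℝ)

/-- Variance of `g` under a uniformly random spanning converging forest. -/
noncomputable def varVal {V : Type*} [Fintype V] [DecidableEq V]
    (E : V → V → Prop) (g : (V → Option V) → ℝ) : ℝ :=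
  expVal E (fun f => (g f - expVal E g) ^ 2)

/-- The indicator estimator `ω̂_{ij}(φ) = 1_{r_φ(i) = j}`. -/
noncomputable def indEst {V : Type*} [Fintype V] [DecidableEq V]
    (i j : V) (f : V → Option V) : ℝ :=
  if rootOf f i = j then 1 else 0

/-- Out-degree `d_i` of node `i`. -/
def outDeg {V : Type*} [Fintype V] (E : V → V → Prop) [DecidableRel E] (i : V) : ℕ :=
  (Finset.univ.filter (fun j => E i j)).card

/-- In-neighbors `N⁻(j)` of node `j`. -/
def inNbrs {V : Type*} [Fintype V] (E : V → V → Prop) [DecidableRel E] (j : V) : Finset V :=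
  Finset.univ.filter (fun k => E k j)

/-- The out-degree Laplacian `L = D - A`. -/
noncomputable def lap {V : Type*} [Fintype V] [DecidableEq V]
    (E : V → V → Prop) [DecidableRel E] : Matrix V V ℝ :=
  Matrix.of fun i j => (if i = j then (outDeg E i : ℝ) else 0) - (if E i j then (1 : ℝ) else 0)

/-- The forest matrix `Ω = (I + L)⁻¹`. -/
noncomputable def forestMatrix {V : Type*} [Fintype V] [DecidableEq V]
    (E : V → V → Prop) [DecidableRel E] : Matrix V V ℝ :=
  (1 + lap E)⁻¹


section Aux
variable {V : Type*} [Fintype V] [DecidableEq V]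

/-- one step of the successor map -/
def stepf (f : V → Option V) : V → V := fun x => (f x).getD x

lemma rootOf_def (f : V → Option V) (x : V) :
    rootOf f x = (stepf f)^[Fintype.card V] x := rfl

variable {f : V → Option V} {h : V → ℕ}

lemma height_le (hh : ∀ i j, f i = some j → h j < h i) (x : V) :
    h (stepf f x) ≤ h x := by
  cases hx : f x with
  | none => simp [stepf, hx]
  | some y => exact le_of_lt (by simpa [stepf, hx] using hh x y hx)

lemma height_lt (hh : ∀ i j, f i = some j → h j < h i) {x : V}
    (hne : stepf f x ≠ x) : h (stepf f x) < h x := by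
  cases hx : f x with
  | none => simp [stepf, hx] at hne
  | some y => simpa [stepf, hx] using hh x y hx

lemma height_iter_anti (hh : ∀ i j, f i = some j → h j < h i) (x : V) :
    Antitone (fun n => h ((stepf f)^[n] x)) := by
  apply antitone_nat_of_succ_le
  intro n
  rw [Function.iterate_succ_apply']
  exact height_le hh _

lemma iterate_eq_of_fixed {x : V} {a : ℕ}
    (hfix : stepf f ((stepf f)^[a] x) = (stepf f)^[a] x)
    {n : ℕ} (han : a ≤ n) : (stepf f)^[n] x = (stepf f)^[a] x := by
  have : n = (n - a) + a := by omega
  rw [this, Function.iterate_add_apply]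
  exact Function.iterate_fixed hfix _

lemma step_root_eq (hh : ∀ i j, f i = some j → h j < h i) (x : V) :
    stepf f (rootOf f x) = rootOf f x := by
  obtain ⟨a, ha, b, hb, hab, heq⟩ :=
    Finset.exists_ne_map_eq_of_card_lt_of_maps_to
      (s := Finset.range (Fintype.card V + 1)) (t := Finset.univ)
      (by simp) (fun n _ => Finset.mem_univ ((stepf f)^[n] x))
  simp only [Finset.mem_range, Nat.lt_succ_iff] at ha hb
  obtain ⟨a, b, hlt, hb, heq⟩ :
      ∃ a b, a < b ∧ b ≤ Fintype.card V ∧ (stepf f)^[a] x = (stepf f)^[b] x := by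
    rcases lt_or_gt_of_ne hab with hl | hl
    exacts [⟨a, b, hl, hb, heq⟩, ⟨b, a, hl, ha, heq.symm⟩]
  have hfix : stepf f ((stepf f)^[a] x) = (stepf f)^[a] x := by
    by_contra hne
    have h1 : h ((stepf f)^[a+1] x) < h ((stepf f)^[a] x) := by
      rw [Function.iterate_succ_apply']
      exact height_lt hh hne
    have h2 : h ((stepf f)^[b] x) ≤ h ((stepf f)^[a+1] x) :=
      height_iter_anti hh x hlt
    rw [← heq] at h2; omega
  rw [rootOf_def, iterate_eq_of_fixed hfix (hlt.le.trans hb)]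
  exact hfix

lemma f_root_eq_none (hh : ∀ i j, f i = some j → h j < h i) (x : V) :
    f (rootOf f x) = none := by
  have hfix := step_root_eq hh x
  cases hr : f (rootOf f x) with
  | none => rfl
  | some k =>
    have : k = rootOf f x := by simpa [stepf, hr] using hfix
    exact absurd (hh _ _ hr) (by rw [this]; omega)

lemma rootOf_of_none {x : V} (hx : f x = none) : rootOf f x = x := by
  rw [rootOf_def]
  exact Function.iterate_fixed (by simp [stepf, hx]) _

open scoped Classical in
/-- length of the path from `i` to its root `j` (junk if no path). -/
noncomputable def plen (f : V → Option V) (i j : V) : ℕ :=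
  if H : ∃ n, (stepf f)^[n] i = j then Nat.find H else 0

/-- the last vertex on the path from `i` to `j` (the in-neighbor of `j`). -/
noncomputable def lastv (f : V → Option V) (i j : V) : V :=
  (stepf f)^[plen f i j - 1] i

/-- the edge-deletion map `Φ`. -/
noncomputable def delEdge (f : V → Option V) (i j : V) : V → Option V :=
  Function.update f (lastv f i j) none

section Path
variable (hh : ∀ i j, f i = some j → h j < h i) {i j : V}
  (hroot : rootOf f i = j) (hij : i ≠ j)
include hh hroot

lemma exists_path : ∃ n, (stepf f)^[n] i = j := ⟨Fintype.card V, hroot⟩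

lemma plen_spec : (stepf f)^[plen f i j] i = j := by
  classical
  rw [plen, dif_pos (exists_path hh hroot)]
  exact Nat.find_spec (exists_path hh hroot)

lemma plen_min {k : ℕ} (hk : k < plen f i j) : (stepf f)^[k] i ≠ j := by
  classical
  rw [plen, dif_pos (exists_path hh hroot)] at hk
  exact Nat.find_min (exists_path hh hroot) hk

lemma plen_le : plen f i j ≤ Fintype.card V := by
  classical
  rw [plen, dif_pos (exists_path hh hroot)]
  exact Nat.find_le hroot

include hij

lemma plen_pos : 0 < plen f i j := by
  rcases Nat.eq_zero_or_pos (plen f i j) with h0 | h0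
  · exact absurd (by simpa [h0] using plen_spec hh hroot) hij
  · exact h0

/-- every iterate strictly before the end is a non-fixed point -/
lemma not_fixed_before {k : ℕ} (hk : k < plen f i j) :
    stepf f ((stepf f)^[k] i) ≠ (stepf f)^[k] i := by
  intro hfix
  have : (stepf f)^[Fintype.card V] i = (stepf f)^[k] i :=
    iterate_eq_of_fixed hfix (le_trans (le_of_lt hk) (plen_le hh hroot))
  exact plen_min hh hroot hk (by rw [← this]; exact hroot)

lemma step_lastv : stepf f (lastv f i j) = j := by
  have hp := plen_pos hh hroot hij
  have h1 : (stepf f)^[(plen f i j - 1) + 1] i = j := by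
    rw [Nat.sub_add_cancel hp]; exact plen_spec hh hroot
  rw [Function.iterate_succ_apply'] at h1
  exact h1

lemma lastv_ne : lastv f i j ≠ j :=
  plen_min hh hroot (Nat.sub_lt (plen_pos hh hroot hij) one_pos)

lemma f_lastv : f (lastv f i j) = some j := by
  have hs := step_lastv hh hroot hij
  cases hl : f (lastv f i j) with
  | none => exact absurd (by simpa [stepf, hl] using hs) (lastv_ne hh hroot hij)
  | some k => rw [show k = j by simpa [stepf, hl] using hs]

/-- vertices strictly before the last one differ from the last one -/
lemma ne_lastv_before {k : ℕ} (hk : k < plen f i j - 1) :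
    (stepf f)^[k] i ≠ lastv f i j := by
  intro heq
  have hm := plen_pos hh hroot hij
  have h1 : h ((stepf f)^[k+1] i) < h ((stepf f)^[k] i) := by
    rw [Function.iterate_succ_apply']
    exact height_lt hh (not_fixed_before hh hroot hij (by omega))
  have h2 : h ((stepf f)^[plen f i j - 1] i) ≤ h ((stepf f)^[k+1] i) :=
    height_iter_anti hh i (by omega)
  rw [lastv] at heq
  rw [← heq] at h2
  omega

/-- iterates of the modified map agree with those of `f` up to the last vertex -/
lemma delEdge_iterate {k : ℕ} (hk : k ≤ plen f i j - 1) :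
    (stepf (delEdge f i j))^[k] i = (stepf f)^[k] i := by
  induction k with
  | zero => rfl
  | succ n ih =>
    have hn : n ≤ plen f i j - 1 := by omega
    rw [Function.iterate_succ_apply', Function.iterate_succ_apply', ih hn]
    have hne : (stepf f)^[n] i ≠ lastv f i j :=
      ne_lastv_before hh hroot hij (by omega)
    simp [stepf, delEdge, Function.update_of_ne hne]

lemma rootOf_delEdge : rootOf (delEdge f i j) i = lastv f i j := by
  have h1 : (stepf (delEdge f i j))^[plen f i j - 1] i = lastv f i j :=
    delEdge_iterate hh hroot hij le_rfl
  have hfix : stepf (delEdge f i j) (lastv f i j) = lastv f i j := by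
    simp [stepf, delEdge, Function.update_self]
  rw [rootOf_def]
  rw [iterate_eq_of_fixed (f := delEdge f i j) (by rw [h1]; exact hfix)
    (le_trans (Nat.sub_le _ _) (plen_le hh hroot)), h1]

lemma delEdge_root_j : rootOf (delEdge f i j) j = j := by
  apply rootOf_of_none
  rw [delEdge, Function.update_of_ne (Ne.symm (lastv_ne hh hroot hij))]
  have : rootOf f i = j := hroot
  rw [← this]
  exact f_root_eq_none hh i

lemma delEdge_recover : Function.update (delEdge f i j) (lastv f i j) (some j) = f := by
  rw [delEdge, Function.update_idem]
  rw [← f_lastv hh hroot hij]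
  exact Function.update_eq_self _ _

end Path

lemma delEdge_isSCF {E : V → V → Prop} (hf : IsSCF E f) (i j : V) :
    IsSCF E (delEdge f i j) := by
  obtain ⟨h1, h, hh⟩ := hf
  have key : ∀ a b, delEdge f i j a = some b → f a = some b := by
    intro a b hab
    by_cases ha : a = lastv f i j
    · subst ha; simp [delEdge, Function.update_self] at hab
    · rwa [delEdge, Function.update_of_ne ha] at hab
  exact ⟨fun a b hab => h1 a b (key a b hab), h, fun a b hab => hh a b (key a b hab)⟩

end Aux

/-- for distinct i ≠ j, |F_jj| ≥ 2·|F_ij| — the number of spanning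
converging forests in which j is a root is at least twice the number in which i
lies in the tree rooted at j — and consequently ω_ij ≤ ω_jj / 2. -/
theorem rooted_forest_count_double {V : Type*} [Fintype V] [DecidableEq V]
    (E : V → V → Prop) (hE : ∀ i, ¬ E i i) (i j : V) (hij : i ≠ j) :
    2 * ((forests E).filter (fun f => rootOf f i = j)).card
        ≤ ((forests E).filter (fun f => rootOf f j = j)).card ∧
    fOmega E i j ≤ fOmega E j j / 2 := by
  classical
  set S := (forests E).filter (fun f => rootOf f i = j) with hS
  set A := (forests E).filter (fun f => rootOf f j = j) with hA
  have memforests : ∀ f, f ∈ forests E ↔ IsSCF E f := by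
    intro f; simp [forests]
  -- every forest in S has j as a root
  have hSsub : ∀ f ∈ S, rootOf f j = j := by
    intro f hf
    rw [hS, Finset.mem_filter] at hf
    obtain ⟨hf1, hf2⟩ := hf
    obtain ⟨-, h, hh⟩ := (memforests f).1 hf1
    apply rootOf_of_none
    rw [← hf2]
    exact f_root_eq_none hh i
  have hcount : 2 * S.card ≤ A.card := by
    have hinj : ∀ f ∈ S, delEdge f i j ∈ A.filter (fun g => ¬ rootOf g i = j) := by
      intro f hf
      rw [hS, Finset.mem_filter] at hf
      obtain ⟨hf1, hf2⟩ := hf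
      have hscf := (memforests f).1 hf1
      obtain ⟨h, hh⟩ := hscf.2
      rw [Finset.mem_filter, hA, Finset.mem_filter]
      refine ⟨⟨(memforests _).2 (delEdge_isSCF hscf i j), delEdge_root_j hh hf2 hij⟩, ?_⟩
      rw [rootOf_delEdge hh hf2 hij]
      exact lastv_ne hh hf2 hij
    have hinjOn : Set.InjOn (fun f => delEdge f i j) S := by
      intro f₁ hf₁ f₂ hf₂ heq
      rw [Finset.mem_coe, hS, Finset.mem_filter] at hf₁ hf₂
      simp only at heq
      obtain ⟨hm₁, hr₁⟩ := hf₁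
      obtain ⟨hm₂, hr₂⟩ := hf₂
      obtain ⟨-, h₁, hh₁⟩ := (memforests f₁).1 hm₁
      obtain ⟨-, h₂, hh₂⟩ := (memforests f₂).1 hm₂
      have hv : lastv f₁ i j = lastv f₂ i j := by
        rw [← rootOf_delEdge hh₁ hr₁ hij, ← rootOf_delEdge hh₂ hr₂ hij, heq]
      calc f₁ = Function.update (delEdge f₁ i j) (lastv f₁ i j) (some j) :=
              (delEdge_recover hh₁ hr₁ hij).symm
        _ = Function.update (delEdge f₂ i j) (lastv f₂ i j) (some j) := by rw [heq, hv]
        _ = f₂ := delEdge_recover hh₂ hr₂ hij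
    have h1 : S.card ≤ (A.filter (fun g => ¬ rootOf g i = j)).card :=
      Finset.card_le_card_of_injOn _ hinj hinjOn
    have h2 : A.filter (fun g => rootOf g i = j) = S := by
      ext f
      simp only [hA, hS, Finset.mem_filter]
      constructor
      · rintro ⟨⟨hf, -⟩, hr⟩; exact ⟨hf, hr⟩
      · rintro ⟨hf, hr⟩
        exact ⟨⟨hf, hSsub f (by rw [hS, Finset.mem_filter]; exact ⟨hf, hr⟩)⟩, hr⟩
    have h3 : (A.filter (fun g => rootOf g i = j)).card
        + (A.filter (fun g => ¬ rootOf g i = j)).card = A.card :=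
      Finset.card_filter_add_card_filter_not _
    rw [h2] at h3
    omega
  refine ⟨hcount, ?_⟩
  have hpos : 0 < (forests E).card := by
    apply Finset.card_pos.2
    refine ⟨fun _ => none, (memforests _).2 ?_⟩
    exact ⟨fun a b hab => by simp at hab, fun _ => 0, fun a b hab => by simp at hab⟩
  rw [fOmega, fOmega, div_div]
  rw [div_le_div_iff₀ (by exact_mod_cast hpos) (by positivity)]
  have hc : (2:ℝ) * S.card ≤ A.card := by exact_mod_cast hcount
  have hnn : (0:ℝ) ≤ ((forests E).card : ℝ) := by positivity
  nlinarith [hc, hnn]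
end

section
/- Define the rooted forest distance between nodes i and j of a finite simple digraph as γ_ij = 2 − ω_ij/ω_jj − ω_ji/ω_ii. Assuming for all nodes a, b, c the inequality ω_ac·ω_bb ≥ ω_ab·ω_bc holds together with ω_bb ≥ ω_ab for all a ≠ b, the triangle inequality γ_ij + γ_jk ≥ γ_ik holds for any three distinct nodes i, j, k. -/
open Finset

/-- for the forest matrix Ω of a finite simple digraph, define the
rooted forest distance γ_ij = 2 − ω_ij/ω_jj − ω_ji/ω_ii.  Assuming
ω_ac·ω_bb ≥ ω_ab·ω_bc for all a,b,c and ω_bb ≥ ω_ab for a ≠ b (with positive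
diagonal), the triangle inequality γ_ij + γ_jk ≥ γ_ik holds for distinct
i, j, k. -/
theorem rooted_forest_distance_triangle {V : Type*} [Fintype V] [DecidableEq V]
    (E : V → V → Prop) [DecidableRel E] (hE : ∀ i, ¬ E i i)
    (hpos : ∀ a, 0 < forestMatrix E a a)
    (hineq : ∀ a b c, forestMatrix E a b * forestMatrix E b c ≤
        forestMatrix E a c * forestMatrix E b b)
    (hdom : ∀ a b, a ≠ b → forestMatrix E a b ≤ forestMatrix E b b)
    (i j k : V) (hij : i ≠ j) (hjk : j ≠ k) (hik : i ≠ k) :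
    (2 - forestMatrix E i k / forestMatrix E k k -
        forestMatrix E k i / forestMatrix E i i)
      ≤ (2 - forestMatrix E i j / forestMatrix E j j -
            forestMatrix E j i / forestMatrix E i i) +
        (2 - forestMatrix E j k / forestMatrix E k k -
            forestMatrix E k j / forestMatrix E j j) := by

  set Ω := forestMatrix E with hΩ
  have key : ∀ a b c : V, a ≠ b → b ≠ c →
      Ω a b / Ω b b + Ω b c / Ω c c ≤ 1 + Ω a c / Ω c c := by
    intro a b c hab hbc
    have hb := hpos b
    have hc := hpos c
    have h1 := hineq a b c
    have h2 := hdom a b hab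
    have h3 := hdom b c hbc
    have expand : 1 + Ω a c / Ω c c - (Ω a b / Ω b b + Ω b c / Ω c c) =
        ((Ω a c * Ω b b - Ω a b * Ω b c) + (Ω b b - Ω a b) * (Ω c c - Ω b c)) /
          (Ω b b * Ω c c) := by
      field_simp
      ring
    have hnum : 0 ≤ (Ω a c * Ω b b - Ω a b * Ω b c) + (Ω b b - Ω a b) * (Ω c c - Ω b c) :=
      add_nonneg (by linarith) (mul_nonneg (by linarith) (by linarith))
    have : 0 ≤ 1 + Ω a c / Ω c c - (Ω a b / Ω b b + Ω b c / Ω c c) := by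
      rw [expand]
      exact div_nonneg hnum (le_of_lt (mul_pos hb hc))
    linarith
  have k1 := key i j k hij hjk
  have k2 := key k j i hjk.symm hij.symm
  linarith
end

section
/- Let x_1, ..., x_l be the values ω̄_ij(φ_1), ..., ω̄_ij(φ_l) of the combined estimator on l independent uniform spanning converging forests, and let x̄ = (1/l)Σx_k. For i ≠ j and ε, δ ∈ (0,1), if l ≥ (1/(2ε²) + 2/(3ε))·log(2/δ)/(2+d_j)², then with probability at least 1 − δ, |x̄ − ω_ij| ≤ ε. -/
open Finset

/-!
Exchanging the successor of `i` in a forest with a spare choice in `{none} ∪ N⁺(i)`, unless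
that choice leads back to `i`, is an involution on pairs (forest, choice). Counting both sides
gives the row identity `(1 + d_i) |F_ij| = δ_ij |F| + ∑_{m ∈ N⁺(i)} |F_mj|`, i.e.
`(I + L) Ω = I`, hence also `Ω (I + L) = I`. Column `j ≠ i` of the latter reads
`(1 + d_j) ω_ij = ∑_{k ∈ N⁻(j)} ω_ik`, so the combined estimator is unbiased; without self-loops
it is the indicator of `r_φ(i) ∈ {j} ∪ N⁻(j)` scaled by `1 / (2 + d_j)`. Hoeffding's inequality
for `l` independent samples of a variable of range `1 / (2 + d_j)` bounds the failure
probability by `2 exp (-2 l ε² (2 + d_j)²)`, which is at most `δ` once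
`l ≥ log (2 / δ) / (2 ε² (2 + d_j)²)`.
-/

open Function Real

section walk

variable {V : Type*} {E : V → V → Prop} {f : V → Option V} {i x y : V}

/-- Roots are fixed, so that `rootOf f = (succStep f)^[card V]` by definition. -/
def succStep (f : V → Option V) (x : V) : V := (f x).getD x

def Reaches (f : V → Option V) (x y : V) : Prop := ∃ n, (succStep f)^[n] x = y

lemma succStep_of_eq_none (h : f x = none) : succStep f x = x := by simp [succStep, h]

lemma succStep_of_eq_some (h : f x = some y) : succStep f x = y := by simp [succStep, h]

lemma Reaches.refl (f : V → Option V) (x : V) : Reaches f x x := ⟨0, rfl⟩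

lemma Reaches.trans {z : V} : Reaches f x y → Reaches f y z → Reaches f x z := by
  rintro ⟨m, rfl⟩ ⟨n, rfl⟩
  exact ⟨n + m, iterate_add_apply _ n m x⟩

lemma reaches_of_eq_some (h : f x = some y) : Reaches f x y := ⟨1, succStep_of_eq_some h⟩

lemma height_iterate_succStep_le {h : V → ℕ} (hh : ∀ a b, f a = some b → h b < h a)
    (x : V) (n : ℕ) : h ((succStep f)^[n] x) ≤ h x := by
  induction n generalizing x with
  | zero => rfl
  | succ n ih =>
    rw [iterate_succ_apply]
    refine (ih _).trans ?_
    cases hx : f x with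
    | none => rw [succStep_of_eq_none hx]
    | some y => rw [succStep_of_eq_some hx]; exact (hh x y hx).le

lemma IsSCF.not_reaches_of_eq_some (hf : IsSCF E f) (hxy : f x = some y) : ¬ Reaches f y x := by
  obtain ⟨-, h, hh⟩ := hf
  rintro ⟨n, hn⟩
  have := height_iterate_succStep_le hh y n
  rw [hn] at this
  exact (hh x y hxy).not_ge this

variable [DecidableEq V] {v : Option V}

lemma iterate_succStep_update (hx : ¬ Reaches f x i) (n : ℕ) :
    (succStep (update f i v))^[n] x = (succStep f)^[n] x := by
  induction n with
  | zero => rfl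
  | succ n ih =>
    rw [iterate_succ_apply', iterate_succ_apply', ih, succStep, succStep,
      update_of_ne fun h => hx ⟨n, h⟩]

lemma reaches_update_iff (hx : ¬ Reaches f x i) :
    Reaches (update f i v) x y ↔ Reaches f x y := by
  simp only [Reaches, iterate_succStep_update hx]

/-- New heights: lift every vertex that reaches `i` above the new successor of `i`. -/
lemma IsSCF.update (hf : IsSCF E f) (hv : ∀ t, v = some t → E i t ∧ ¬ Reaches f t i) :
    IsSCF E (update f i v) := by
  obtain ⟨hfE, h, hh⟩ := hf
  have hE : ∀ a b, Function.update f i v a = some b → E a b := by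
    intro a b hab
    rcases eq_or_ne a i with rfl | ha
    · exact (hv b (by rwa [update_self] at hab)).1
    · exact hfE a b (by rwa [update_of_ne ha] at hab)
  rcases v with _ | t
  · refine ⟨hE, h, fun a b hab => ?_⟩
    rcases eq_or_ne a i with rfl | ha
    · simp at hab
    · exact hh a b (by rwa [update_of_ne ha] at hab)
  obtain ⟨-, hti⟩ := hv t rfl
  classical
  refine ⟨hE, fun x => h x + if Reaches f x i then h t + 1 else 0, fun a b hab => ?_⟩
  dsimp only
  rcases eq_or_ne a i with rfl | ha
  · obtain rfl : t = b := by simpa using hab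
    rw [if_neg hti, if_pos (Reaches.refl f a)]
    omega
  · rw [update_of_ne ha] at hab
    have hab' := hh a b hab
    by_cases hb : Reaches f b i
    · rw [if_pos hb, if_pos ((reaches_of_eq_some hab).trans hb)]
      omega
    · rw [if_neg hb]
      omega

open Classical in
noncomputable def swapSucc (i : V) (x : (V → Option V) × Option V) : (V → Option V) × Option V :=
  if ∃ t, x.2 = some t ∧ Reaches x.1 t i then x else (update x.1 i x.2, x.1 i)

lemma swapSucc_of_reaches {x : (V → Option V) × Option V}
    (h : ∃ t, x.2 = some t ∧ Reaches x.1 t i) : swapSucc i x = x := if_pos h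

lemma swapSucc_of_not_reaches {x : (V → Option V) × Option V}
    (h : ¬ ∃ t, x.2 = some t ∧ Reaches x.1 t i) : swapSucc i x = (update x.1 i x.2, x.1 i) :=
  if_neg h

lemma IsSCF.swapSucc_swapSucc {x : (V → Option V) × Option V} (hx : IsSCF E x.1) :
    swapSucc i (swapSucc i x) = x := by
  by_cases h : ∃ t, x.2 = some t ∧ Reaches x.1 t i
  · rw [swapSucc_of_reaches h, swapSucc_of_reaches h]
  · rw [swapSucc_of_not_reaches h, swapSucc_of_not_reaches]
    · simp
    · rintro ⟨t, ht, hti⟩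
      have hti' := hx.not_reaches_of_eq_some ht
      exact hti' ((reaches_update_iff hti').mp hti)

end walk

section root

variable {V : Type*} [Fintype V] {E : V → V → Prop} {f : V → Option V} {i x y : V}

lemma reaches_rootOf (f : V → Option V) (x : V) : Reaches f x (rootOf f x) := ⟨_, rfl⟩

lemma rootOf_of_eq_none (h : f x = none) : rootOf f x = x :=
  iterate_fixed (succStep_of_eq_none h) _

namespace IsSCF

/-- Two of the first `card V + 1` points of the walk coincide, and heights strictly decrease
until a root is hit, so the walk has stopped at a root by step `card V`. -/
lemma apply_rootOf (hf : IsSCF E f) (x : V) : f (rootOf f x) = none := by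
  obtain ⟨-, h, hh⟩ := hf
  have hroot : ∃ a ≤ Fintype.card V, f ((succStep f)^[a] x) = none := by
    obtain ⟨a, b, hab, heq⟩ := Fintype.exists_ne_map_eq_of_card_lt
      (fun k : Fin (Fintype.card V + 1) => (succStep f)^[k] x) (by simp)
    wlog hlt : a < b generalizing a b
    · exact this b a hab.symm heq.symm (lt_of_le_of_ne (not_lt.mp hlt) hab.symm)
    refine ⟨a, Nat.lt_succ_iff.mp a.2, ?_⟩
    cases ha : f ((succStep f)^[a] x) with
    | none => rfl
    | some y =>
      have hb : (succStep f)^[b] x = (succStep f)^[b - (a + 1)] y := by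
        rw [← succStep_of_eq_some ha, ← iterate_succ_apply' (succStep f), ← iterate_add_apply]
        congr 1
        omega
      have := height_iterate_succStep_le hh y (b - (a + 1))
      rw [← hb, ← heq] at this
      exact absurd (hh _ _ ha) this.not_gt
  obtain ⟨a, ha, hfa⟩ := hroot
  have : rootOf f x = (succStep f)^[a] x := by
    rw [rootOf, ← Nat.sub_add_cancel ha, iterate_add_apply]
    exact iterate_fixed (succStep_of_eq_none hfa) _
  rwa [this]

lemma rootOf_eq_of_reaches (hf : IsSCF E f) (hxy : Reaches f x y) : rootOf f x = rootOf f y := by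
  obtain ⟨n, rfl⟩ := hxy
  change _ = (succStep f)^[_] ((succStep f)^[n] x)
  rw [← iterate_add_apply, add_comm, iterate_add_apply]
  exact (iterate_fixed (succStep_of_eq_none (hf.apply_rootOf x)) n).symm

lemma rootOf_eq_of_reaches_root (hf : IsSCF E f) {r : V} (hxr : Reaches f x r)
    (hr : f r = none) : rootOf f x = r :=
  (hf.rootOf_eq_of_reaches hxr).trans (rootOf_of_eq_none hr)

lemma rootOf_update [DecidableEq V] {v : Option V} (hf : IsSCF E f)
    (hg : IsSCF E (Function.update f i v)) (hx : ¬ Reaches f x i) :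
    rootOf (Function.update f i v) x = rootOf f x := by
  have hne : rootOf f x ≠ i := fun h => hx (h ▸ reaches_rootOf f x)
  refine hg.rootOf_eq_of_reaches_root ((reaches_update_iff hx).mpr (reaches_rootOf f x)) ?_
  rw [update_of_ne hne, hf.apply_rootOf]

end IsSCF

end root

section rowIdentity

variable {V : Type*} [Fintype V] [DecidableEq V] {E : V → V → Prop} {i : V}

lemma mem_forests {f : V → Option V} : f ∈ forests E ↔ IsSCF E f := by simp [forests]

lemma forests_nonempty : (forests E).Nonempty :=
  ⟨fun _ => none, mem_forests.mpr ⟨by simp, 0, by simp⟩⟩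

variable [DecidableRel E]

def succChoices (E : V → V → Prop) [DecidableRel E] (i : V) : Finset (Option V) :=
  insert none (({m | E i m} : Finset V).map Embedding.some)

lemma mem_succChoices {c : Option V} : c ∈ succChoices E i ↔ ∀ t, c = some t → E i t := by
  cases c <;> simp [succChoices]

lemma card_succChoices : #(succChoices E i) = 1 + outDeg E i := by
  rw [succChoices, card_insert_of_notMem (by simp), card_map, outDeg, add_comm]

lemma swapSucc_mem {x : (V → Option V) × Option V} (hx : x ∈ forests E ×ˢ succChoices E i) :
    swapSucc i x ∈ forests E ×ˢ succChoices E i := by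
  rw [mem_product, mem_forests, mem_succChoices] at hx ⊢
  obtain ⟨hg, hc⟩ := hx
  by_cases h : ∃ t, x.2 = some t ∧ Reaches x.1 t i
  · rw [swapSucc_of_reaches h]
    exact ⟨hg, hc⟩
  · rw [swapSucc_of_not_reaches h]
    push Not at h
    exact ⟨hg.update fun t ht => ⟨hc t ht, h t ht⟩, fun t ht => hg.1 i t ht⟩

/-- `o.elim i (rootOf f)` is the root reached by leaving `i` through `o`; so the old root of `i`
is read off the swapped pair. -/
lemma rootOf_eq_elim_swapSucc {x : (V → Option V) × Option V}
    (hx : x ∈ forests E ×ˢ succChoices E i) :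
    rootOf x.1 i = (swapSucc i x).2.elim i (rootOf (swapSucc i x).1) := by
  rw [mem_product, mem_forests, mem_succChoices] at hx
  obtain ⟨hg, hc⟩ := hx
  by_cases h : ∃ t, x.2 = some t ∧ Reaches x.1 t i
  · rw [swapSucc_of_reaches h]
    obtain ⟨t, ht, hti⟩ := h
    rw [ht, Option.elim_some]
    exact (hg.rootOf_eq_of_reaches hti).symm
  · rw [swapSucc_of_not_reaches h]
    push Not at h
    have hupd := hg.update fun t ht => ⟨hc t ht, h t ht⟩
    dsimp only
    cases hgi : x.1 i with
    | none => exact rootOf_of_eq_none hgi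
    | some m =>
      rw [Option.elim_some, hg.rootOf_update hupd (hg.not_reaches_of_eq_some hgi)]
      exact hg.rootOf_eq_of_reaches (reaches_of_eq_some hgi)

lemma card_filter_rootOf_eq_card_filter_elim (i j : V) :
    #{x ∈ forests E ×ˢ succChoices E i | rootOf x.1 i = j} =
      #{x ∈ forests E ×ˢ succChoices E i | x.2.elim i (rootOf x.1) = j} := by
  have hinv {x} (hx : x ∈ forests E ×ˢ succChoices E i) : swapSucc i (swapSucc i x) = x :=
    IsSCF.swapSucc_swapSucc (mem_forests.mp (mem_product.mp hx).1)
  refine card_bij' (fun x _ => swapSucc i x) (fun x _ => swapSucc i x) (fun x hx => ?_)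
    (fun x hx => ?_) (fun x hx => hinv (mem_filter.mp hx).1) (fun x hx => hinv (mem_filter.mp hx).1)
  · rw [mem_filter] at hx ⊢
    exact ⟨swapSucc_mem hx.1, (rootOf_eq_elim_swapSucc hx.1).symm.trans hx.2⟩
  · rw [mem_filter] at hx ⊢
    refine ⟨swapSucc_mem hx.1, ?_⟩
    rw [rootOf_eq_elim_swapSucc (swapSucc_mem hx.1), hinv hx.1]
    exact hx.2

theorem card_filter_rootOf_mul_one_add_outDeg (i j : V) :
    #{f ∈ forests E | rootOf f i = j} * (1 + outDeg E i) =
      (if i = j then #(forests E) else 0) + ∑ m with E i m, #{f ∈ forests E | rootOf f m = j} := by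
  have h := card_filter_rootOf_eq_card_filter_elim (E := E) i j
  rw [filter_product_left (fun f => rootOf f i = j), card_product, card_succChoices] at h
  rw [h, card_filter, sum_product_right, succChoices, sum_insert (by simp), sum_map]
  simp only [Option.elim_none, Option.elim_some, Embedding.some_apply, card_filter]
  split_ifs with hij <;> simp [hij]

end rowIdentity

section forestMatrix

variable {V : Type*} [Fintype V] [DecidableEq V] {E : V → V → Prop} [DecidableRel E]

lemma one_add_lap_apply (a b : V) :
    (1 + lap E) a b = (if a = b then 1 + (outDeg E a : ℝ) else 0) - if E a b then 1 else 0 := by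
  by_cases h : a = b <;> simp [lap, h, add_sub_assoc]

theorem one_add_lap_mul_fOmega : (1 + lap E) * Matrix.of (fOmega E) = 1 := by
  ext i j
  have hN : (#(forests E) : ℝ) ≠ 0 := by exact_mod_cast forests_nonempty.card_pos.ne'
  have h := congrArg (Nat.cast : ℕ → ℝ) (card_filter_rootOf_mul_one_add_outDeg (E := E) i j)
  push_cast at h
  simp only [Matrix.mul_apply, one_add_lap_apply, Matrix.of_apply, sub_mul, sum_sub_distrib,
    ite_mul, zero_mul, one_mul, sum_ite_eq, mem_univ, if_true, ← sum_filter, Matrix.one_apply,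
    fOmega, ← sum_div]
  rw [← mul_div_assoc, div_sub_div_same, div_eq_iff hN, mul_comm, h]
  split_ifs <;> ring

theorem fOmega_mul_one_add_lap : Matrix.of (fOmega E) * (1 + lap E) = 1 :=
  mul_eq_one_comm.mp one_add_lap_mul_fOmega

theorem one_add_outDeg_mul_fOmega (i j : V) :
    (1 + (outDeg E j : ℝ)) * fOmega E i j =
      (if i = j then 1 else 0) + ∑ k ∈ inNbrs E j, fOmega E i k := by
  have h := congrFun (congrFun (fOmega_mul_one_add_lap (E := E)) i) j
  simp only [Matrix.mul_apply, one_add_lap_apply, Matrix.of_apply, mul_sub, sum_sub_distrib,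
    mul_ite, mul_zero, mul_one, sum_ite_eq', mem_univ, if_true, ← sum_filter,
    Matrix.one_apply] at h
  rw [inNbrs, ← h]
  ring

end forestMatrix

section combinedEstimator

variable {V : Type*} [Fintype V] [DecidableEq V] {E : V → V → Prop} {i j : V}

noncomputable def combinedEst (E : V → V → Prop) [DecidableRel E] (i j : V)
    (f : V → Option V) : ℝ :=
  (1 / (2 + (outDeg E j : ℝ))) * (indEst i j f + ∑ c ∈ inNbrs E j, indEst i c f)

lemma expVal_indEst : expVal E (indEst i j) = fOmega E i j := by
  simp [expVal, fOmega, indEst, sum_boole]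

lemma indEst_add_sum_indEst {S : Finset V} (hj : j ∉ S) (f : V → Option V) :
    indEst i j f + ∑ c ∈ S, indEst i c f = if rootOf f i ∈ insert j S then 1 else 0 := by
  simp only [indEst, sum_ite_eq, mem_insert]
  by_cases h : rootOf f i = j
  · simp [h, hj]
  · simp [h]

variable [DecidableRel E]

lemma combinedEst_mem_Icc (hj : ¬ E j j) (f : V → Option V) :
    combinedEst E i j f ∈ Set.Icc 0 (1 / (2 + (outDeg E j : ℝ))) := by
  have hS : j ∉ inNbrs E j := by simpa [inNbrs] using hj
  rw [combinedEst, indEst_add_sum_indEst hS]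
  constructor <;> split_ifs <;> simp [add_nonneg]

theorem expVal_combinedEst (hij : i ≠ j) : expVal E (combinedEst E i j) = fOmega E i j := by
  have hcol := one_add_outDeg_mul_fOmega (E := E) i j
  rw [if_neg hij, zero_add] at hcol
  have hlin : expVal E (combinedEst E i j) = (1 / (2 + (outDeg E j : ℝ))) *
      (expVal E (indEst i j) + ∑ c ∈ inNbrs E j, expVal E (indEst i c)) := by
    simp only [expVal, combinedEst, ← mul_sum, sum_add_distrib, mul_div_assoc, add_div, sum_div]
    rw [sum_comm]
  simp only [hlin, expVal_indEst, ← hcol]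
  field_simp
  ring

end combinedEstimator

section hoeffding

open ProbabilityTheory MeasureTheory

variable {α : Type*} {s : Finset α}

/-- Hoeffding's lemma for the uniform distribution on `s`. -/
lemma sum_exp_mul_sub_mean_le (hs : s.Nonempty) {Z : α → ℝ} {a b : ℝ}
    (hZ : ∀ x ∈ s, Z x ∈ Set.Icc a b) (t : ℝ) :
    ∑ x ∈ s, exp (t * (Z x - (∑ y ∈ s, Z y) / #s))
      ≤ #s * exp (((b - a) / 2) ^ 2 * t ^ 2 / 2) := by
  let _ : MeasurableSpace s := ⊤
  have : Nonempty s := hs.to_subtype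
  let μ := (PMF.uniformOfFintype s).toMeasure
  have integral_eq (g : α → ℝ) : ∫ x : s, g x ∂μ = (∑ y ∈ s, g y) / #s := by
    rw [PMF.integral_eq_sum, Finset.sum_div, ← Finset.sum_coe_sort s]
    simp [PMF.uniformOfFintype_apply, div_eq_inv_mul]
  have h := (hasSubgaussianMGF_of_mem_Icc (μ := μ) (X := fun x : s => Z x)
    Measurable.of_discrete.aemeasurable (ae_of_all _ fun x => hZ x x.2)).mgf_le t
  rw [mgf, integral_eq, integral_eq (fun y => exp (t * (Z y - (∑ y ∈ s, Z y) / #s))),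
    div_le_iff₀' (by exact_mod_cast hs.card_pos)] at h
  refine h.trans_eq ?_
  push_cast
  rw [Real.norm_eq_abs, div_pow, div_pow, sq_abs]

/-- Chernoff's bound; counting in `piFinset` models `l` independent uniform samples from `s`. -/
lemma card_piFinset_sum_ge_le (Y : α → ℝ) (l : ℕ) (c : ℝ) {t : ℝ} (ht : 0 ≤ t) :
    (#{φ ∈ Fintype.piFinset fun _ : Fin l => s | c ≤ ∑ k, Y (φ k)} : ℝ)
      ≤ exp (-(t * c)) * (∑ x ∈ s, exp (t * Y x)) ^ l := by
  calc (#{φ ∈ Fintype.piFinset fun _ : Fin l => s | c ≤ ∑ k, Y (φ k)} : ℝ)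
      ≤ ∑ φ ∈ Fintype.piFinset fun _ : Fin l => s, exp (t * (∑ k, Y (φ k)) - t * c) := by
        rw [card_eq_sum_ones, Nat.cast_sum, sum_filter]
        refine sum_le_sum fun φ _ => ?_
        split_ifs with h
        · simpa using one_le_exp (sub_nonneg.mpr (mul_le_mul_of_nonneg_left h ht))
        · exact (exp_pos _).le
    _ = exp (-(t * c)) * (∑ x ∈ s, exp (t * Y x)) ^ l := by
        rw [← Fin.prod_const, prod_univ_sum, mul_sum]
        refine sum_congr rfl fun φ _ => ?_
        rw [← exp_sum, ← exp_add, mul_sum]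
        ring_nf

/-- `hY` says that `Y` is sub-Gaussian with variance proxy `σ` under the uniform distribution
on `s`. -/
lemma card_piFinset_sum_ge_le_of_sum_exp_le {Y : α → ℝ} {σ : ℝ} (hσ : 0 < σ)
    (hY : ∀ t, ∑ x ∈ s, exp (t * Y x) ≤ #s * exp (σ * t ^ 2 / 2)) (l : ℕ) {e : ℝ} (he : 0 ≤ e) :
    (#{φ ∈ Fintype.piFinset fun _ : Fin l => s | l * e ≤ ∑ k, Y (φ k)} : ℝ)
      ≤ #s ^ l * exp (-(l * e ^ 2 / (2 * σ))) := by
  refine (card_piFinset_sum_ge_le Y l (l * e) (div_nonneg he hσ.le)).trans ?_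
  calc exp (-(e / σ * (l * e))) * (∑ x ∈ s, exp (e / σ * Y x)) ^ l
      ≤ exp (-(e / σ * (l * e))) * (#s * exp (σ * (e / σ) ^ 2 / 2)) ^ l := by
        gcongr
        exact hY _
    _ = #s ^ l * exp (-(l * e ^ 2 / (2 * σ))) := by
        rw [mul_pow, ← exp_nat_mul, mul_left_comm, ← exp_add]
        congr 2
        field_simp
        ring

theorem card_piFinset_abs_mean_sub_ge_le (hs : s.Nonempty) {Z : α → ℝ} {a b : ℝ} (hab : a < b)
    (hZ : ∀ x ∈ s, Z x ∈ Set.Icc a b) (l : ℕ) {ε : ℝ} (hε : 0 ≤ ε) :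
    (#{φ ∈ Fintype.piFinset fun _ : Fin l => s |
        ε ≤ |(∑ k, Z (φ k)) / l - (∑ y ∈ s, Z y) / #s|} : ℝ)
      ≤ 2 * #s ^ l * exp (-(2 * l * ε ^ 2 / (b - a) ^ 2)) := by
  classical
  set m := (∑ y ∈ s, Z y) / #s
  set A := Fintype.piFinset fun _ : Fin l => s
  rcases l.eq_zero_or_pos with rfl | hl
  · refine (Nat.cast_le.mpr (card_filter_le _ _)).trans ?_
    simp [A]
  have hσ : 0 < ((b - a) / 2) ^ 2 := by have := sub_pos.mpr hab; positivity
  have hexp : -(l * ε ^ 2 / (2 * ((b - a) / 2) ^ 2)) = -(2 * l * ε ^ 2 / (b - a) ^ 2) := by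
    field_simp
  have hupper := card_piFinset_sum_ge_le_of_sum_exp_le hσ (Y := fun x => Z x - m)
    (sum_exp_mul_sub_mean_le hs hZ) l hε
  have hlower := card_piFinset_sum_ge_le_of_sum_exp_le (s := s) hσ (Y := fun x => -(Z x - m))
    (fun t => by simpa only [mul_neg, neg_mul, neg_sq] using sum_exp_mul_sub_mean_le hs hZ (-t))
    l hε
  rw [hexp] at hupper hlower
  have hsplit : {φ ∈ A | ε ≤ |(∑ k, Z (φ k)) / l - m|} ⊆
      {φ ∈ A | l * ε ≤ ∑ k, (Z (φ k) - m)} ∪ {φ ∈ A | l * ε ≤ ∑ k, -(Z (φ k) - m)} := by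
    intro φ
    simp only [mem_filter, mem_union, sum_neg_distrib]
    rintro ⟨hφ, h⟩
    have hmean : (∑ k, Z (φ k)) / l - m = (∑ k, (Z (φ k) - m)) / l := by
      rw [sum_sub_distrib, sum_const, card_univ, Fintype.card_fin, nsmul_eq_mul]
      field_simp
    rw [hmean, abs_div, Nat.abs_cast, le_div_iff₀ (by exact_mod_cast hl), mul_comm, le_abs] at h
    tauto
  calc (#{φ ∈ A | ε ≤ |(∑ k, Z (φ k)) / l - m|} : ℝ)
      ≤ #{φ ∈ A | l * ε ≤ ∑ k, (Z (φ k) - m)} + #{φ ∈ A | l * ε ≤ ∑ k, -(Z (φ k) - m)} := by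
        exact_mod_cast (card_le_card hsplit).trans (card_union_le _ _)
    _ ≤ 2 * #s ^ l * exp (-(2 * l * ε ^ 2 / (b - a) ^ 2)) := by linarith

theorem one_sub_mul_card_le_card_piFinset_abs_mean_sub_le (hs : s.Nonempty) {Z : α → ℝ}
    {a b : ℝ} (hab : a < b) (hZ : ∀ x ∈ s, Z x ∈ Set.Icc a b) (l : ℕ) {ε δ : ℝ} (hε : 0 ≤ ε)
    (hδ : 0 < δ) (hl : log (2 / δ) ≤ 2 * l * ε ^ 2 / (b - a) ^ 2) :
    (1 - δ) * #s ^ l ≤ (#{φ ∈ Fintype.piFinset fun _ : Fin l => s |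
        |(∑ k, Z (φ k)) / l - (∑ y ∈ s, Z y) / #s| ≤ ε} : ℝ) := by
  set A := Fintype.piFinset fun _ : Fin l => s
  set P := fun φ : Fin l → α => |(∑ k, Z (φ k)) / l - (∑ y ∈ s, Z y) / #s| ≤ ε
  have hA : (#A : ℝ) = #s ^ l := by simp [A]
  have hsplit : (#(A.filter P) : ℝ) + #(A.filter (¬ P ·)) = #A := by
    exact_mod_cast card_filter_add_card_filter_not P
  have hbad : #(A.filter (¬ P ·)) ≤ #{φ ∈ A | ε ≤ |(∑ k, Z (φ k)) / l - (∑ y ∈ s, Z y) / #s|} :=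
    card_le_card fun φ hφ => by
      rw [mem_filter] at hφ ⊢
      exact ⟨hφ.1, (not_le.mp hφ.2).le⟩
  have hexp : 2 * exp (-(2 * l * ε ^ 2 / (b - a) ^ 2)) ≤ δ :=
    calc 2 * exp (-(2 * l * ε ^ 2 / (b - a) ^ 2)) ≤ 2 * exp (-log (2 / δ)) := by gcongr
      _ = δ := by rw [exp_neg, exp_log (by positivity)]; field_simp
  have htail := card_piFinset_abs_mean_sub_ge_le hs hab hZ l hε
  have hδ' := mul_le_mul_of_nonneg_left hexp (by positivity : (0 : ℝ) ≤ #s ^ l)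
  have hbad' := (Nat.cast_le (α := ℝ)).mpr hbad
  linarith

end hoeffding

open scoped Classical in
/-- for distinct i ≠ j and l independent uniform spanning
converging forests, the averaged combined estimator
x̄ = (1/l)·Σ_k ω̄_ij(φ_k), with
ω̄_ij(φ) = (1/(2+d_j))·(1_{r_φ(i)=j} + Σ_{k∈N⁻(j)} 1_{r_φ(i)=k}), satisfies
|x̄ − ω_ij| ≤ ε with probability at least 1 − δ, provided
l ≥ (1/(2ε²) + 2/(3ε))·log(2/δ)/(2+d_j)². -/
theorem combinedEst_concentration {V : Type*} [Fintype V] [DecidableEq V]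
    (E : V → V → Prop) [DecidableRel E] (hE : ∀ i, ¬ E i i)
    (i j : V) (hij : i ≠ j)
    (l : ℕ) (ε δ : ℝ) (hε : 0 < ε ∧ ε < 1) (hδ : 0 < δ ∧ δ < 1)
    (hl : (1 / (2 * ε ^ 2) + 2 / (3 * ε)) * Real.log (2 / δ) /
        (2 + (outDeg E j : ℝ)) ^ 2 ≤ (l : ℝ)) :
    (1 - δ) *
        ((Finset.univ.filter
            (fun φ : Fin l → (V → Option V) => ∀ k, φ k ∈ forests E)).card : ℝ)
      ≤ ((Finset.univ.filter
            (fun φ : Fin l → (V → Option V) => (∀ k, φ k ∈ forests E) ∧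
              |(1 / (l : ℝ)) * (∑ k, (1 / (2 + (outDeg E j : ℝ))) *
                  (indEst i j (φ k) + ∑ c ∈ inNbrs E j, indEst i c (φ k))) -
                fOmega E i j| ≤ ε)).card : ℝ) := by
  set D : ℝ := 2 + outDeg E j
  have hsample : log (2 / δ) ≤ 2 * l * ε ^ 2 / (1 / D - 0) ^ 2 := by
    have h : 1 / (2 * ε ^ 2) * log (2 / δ) / D ^ 2 ≤ l := by
      refine le_trans ?_ hl
      have : 0 ≤ log (2 / δ) := log_nonneg (by rw [le_div_iff₀ hδ.1]; linarith)
      gcongr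
      exact le_add_of_nonneg_right (by have := hε.1; positivity)
    rw [sub_zero, div_pow, one_pow, div_div_eq_mul_div, div_one]
    rw [div_le_iff₀ (by positivity), one_div_mul_eq_div,
      div_le_iff₀ (by have := hε.1; positivity)] at h
    linarith
  have h := one_sub_mul_card_le_card_piFinset_abs_mean_sub_le (forests_nonempty (E := E))
    (one_div_pos.mpr (by positivity)) (fun f _ => combinedEst_mem_Icc (i := i) (hE j) f) l
    hε.1.le hδ.1 hsample
  rw [show (∑ f ∈ forests E, combinedEst E i j f) / #(forests E) = fOmega E i j from
    expVal_combinedEst hij] at h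
  convert h using 3
  · simp only [← Fintype.mem_piFinset, filter_univ_mem, Fintype.card_piFinset, prod_const,
      card_univ, Fintype.card_fin, Nat.cast_pow]
  · ext φ
    simp [D, combinedEst, inv_mul_eq_div]
end
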